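/- Let α, β, v ∈ ℝ with β ≠ 0. On the open set U = {(S,I,R) ∈ ℝ³ : β·S + v > 0}, define the skew-symmetric matrix-valued map π₂ with entries π₂_{SI} = −β·S·I − v·I, π₂_{SR} = β·S·I + v·I, π₂_{IR} = −β·S·I − v·I, and the Hamiltonian H₂(S,I,R) = −(R + ((α+v)/β)·log(β·S + v)). Then (i) π₂ satisfies the Jacobi identity on U; (ii) for all (S,I,R) ∈ U, π₂·∇H₂ = (−β·S·I − v·I, β·S·I − α·I, α·I + v·I), the vector field of the SIR model with vaccination rate v·I; and (iii) the sum of π₂ with the first structure π₁ (entries π₁_{SI} = 0, π₁_{SR} = −β·S·I − v·I, π₁_{IR} = β·S·I − α·I) also satisfies the Jacobi identity, so the two structures are compatible. -/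

import Mathlib

/-- A pointwise skew-symmetric matrix-valued map satisfies the Jacobi identity on a set `U`
if for all `x ∈ U` and indices `i j k`,
`∑ l, (P_{l i}(x)·∂_l P_{j k}(x) + P_{l j}(x)·∂_l P_{k i}(x) + P_{l k}(x)·∂_l P_{i j}(x)) = 0`. -/
def JacobiIdentityOn {n : Type*} [Fintype n] [DecidableEq n]
    (P : (n → ℝ) → Matrix n n ℝ) (U : Set (n → ℝ)) : Prop :=
  ∀ x ∈ U, ∀ i j k : n,
    ∑ l : n,
      (P x l i * fderiv ℝ (fun y => P y j k) x (Pi.single l 1) +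
        P x l j * fderiv ℝ (fun y => P y k i) x (Pi.single l 1) +
        P x l k * fderiv ℝ (fun y => P y i j) x (Pi.single l 1)) = 0

/-- The Hamiltonian vector field `π(x)·∇H(x)` of a matrix-valued map `P` and Hamiltonian `H`. -/
noncomputable def hamVF {n : Type*} [Fintype n] [DecidableEq n]
    (P : (n → ℝ) → Matrix n n ℝ) (H : (n → ℝ) → ℝ) (x : n → ℝ) : n → ℝ :=
  (P x).mulVec fun j => fderiv ℝ H x (Pi.single j 1)

/-- The second Poisson structure of the SIR model with vaccination rate `v·I`, on coordinates
`(S,I,R) = (x 0, x 1, x 2)`: `π₂_{SI} = −β·S·I − v·I`, `π₂_{SR} = β·S·I + v·I`,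
`π₂_{IR} = −β·S·I − v·I`. -/
noncomputable def sirVaccIPoisson2 (β v : ℝ) (x : Fin 3 → ℝ) : Matrix (Fin 3) (Fin 3) ℝ :=
  Matrix.of
    ![![0, -β * x 0 * x 1 - v * x 1, β * x 0 * x 1 + v * x 1],
      ![-(-β * x 0 * x 1 - v * x 1), 0, -β * x 0 * x 1 - v * x 1],
      ![-(β * x 0 * x 1 + v * x 1), -(-β * x 0 * x 1 - v * x 1), 0]]

/-- The first Poisson structure of the SIR model with vaccination rate `v·I`:
`π₁_{SI} = 0`, `π₁_{SR} = −β·S·I − v·I`, `π₁_{IR} = β·S·I − α·I`. -/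
noncomputable def sirVaccIPoisson1 (α β v : ℝ) (x : Fin 3 → ℝ) : Matrix (Fin 3) (Fin 3) ℝ :=
  Matrix.of
    ![![0, 0, -β * x 0 * x 1 - v * x 1],
      ![0, 0, β * x 0 * x 1 - α * x 1],
      ![-(-β * x 0 * x 1 - v * x 1), -(β * x 0 * x 1 - α * x 1), 0]]

/-!
For a pointwise skew-symmetric structure the jacobiator is alternating in its three indices, so on
`ℝ³` the Jacobi identity reduces to its single component `(S, I, R)`, i.e. to `J · curl J = 0` for
`J = (π_{IR}, π_{RS}, π_{SI})`. Every entry of `π₂` and of `π₁ + π₂` has the form `(a·S + b)·I`,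
which makes that component an explicit polynomial identity. For the Hamiltonian part,
`∇H₂ = (-(α + v)/(β·S + v), 0, -1)`, and multiplying by `π₂` cancels the factor `β·S + v`.
-/

open scoped Matrix

section Jacobiator

variable {n : Type*} [Fintype n] [DecidableEq n]

noncomputable def jacobiator (P : (n → ℝ) → Matrix n n ℝ) (x : n → ℝ) (i j k : n) : ℝ :=
  ∑ l : n,
    (P x l i * fderiv ℝ (fun y => P y j k) x (Pi.single l 1) +
      P x l j * fderiv ℝ (fun y => P y k i) x (Pi.single l 1) +
      P x l k * fderiv ℝ (fun y => P y i j) x (Pi.single l 1))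

theorem jacobiIdentityOn_iff_jacobiator {P : (n → ℝ) → Matrix n n ℝ} {U : Set (n → ℝ)} :
    JacobiIdentityOn P U ↔ ∀ x ∈ U, ∀ i j k, jacobiator P x i j k = 0 :=
  Iff.rfl

theorem jacobiator_cycle (P : (n → ℝ) → Matrix n n ℝ) (x : n → ℝ) (i j k : n) :
    jacobiator P x j k i = jacobiator P x i j k := by
  unfold jacobiator
  exact Finset.sum_congr rfl fun l _ => by ring

theorem jacobiator_swap {P : (n → ℝ) → Matrix n n ℝ} (hP : ∀ y, (P y)ᵀ = -P y)
    (x : n → ℝ) (i j k : n) : jacobiator P x i k j = -jacobiator P x i j k := by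
  have hentry : ∀ a b, (fun y => P y b a) = fun y => -P y a b := fun a b => by
    ext y
    rw [← Matrix.transpose_apply (P y), hP, Matrix.neg_apply]
  unfold jacobiator
  rw [← Finset.sum_neg_distrib]
  refine Finset.sum_congr rfl fun l _ => ?_
  simp only [hentry k j, hentry j i, hentry i k, fderiv_fun_neg, neg_apply]
  ring

theorem jacobiator_self_right {P : (n → ℝ) → Matrix n n ℝ} (hP : ∀ y, (P y)ᵀ = -P y)
    (x : n → ℝ) (i j : n) : jacobiator P x i j j = 0 := by
  have := jacobiator_swap hP x i j j
  linarith

theorem jacobiIdentityOn_of_jacobiator_zero_one_two {P : (Fin 3 → ℝ) → Matrix (Fin 3) (Fin 3) ℝ}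
    {U : Set (Fin 3 → ℝ)} (hP : ∀ y, (P y)ᵀ = -P y) (h : ∀ x ∈ U, jacobiator P x 0 1 2 = 0) :
    JacobiIdentityOn P U := by
  rw [jacobiIdentityOn_iff_jacobiator]
  intro x hx i j k
  have h012 := h x hx
  have h120 : jacobiator P x 1 2 0 = 0 := (jacobiator_cycle P x 0 1 2).trans h012
  have h201 : jacobiator P x 2 0 1 = 0 := (jacobiator_cycle P x 1 2 0).trans h120
  have h021 : jacobiator P x 0 2 1 = 0 := by rw [jacobiator_swap hP, h012, neg_zero]
  have h102 : jacobiator P x 1 0 2 = 0 := by rw [jacobiator_swap hP, h120, neg_zero]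
  have h210 : jacobiator P x 2 1 0 = 0 := by rw [jacobiator_swap hP, h201, neg_zero]
  have hself : ∀ a b, jacobiator P x a b b = 0 := jacobiator_self_right hP x
  have hleft : ∀ a b, jacobiator P x b b a = 0 := fun a b =>
    (jacobiator_cycle P x a b b).trans (hself a b)
  have hmid : ∀ a b, jacobiator P x b a b = 0 := fun a b =>
    (jacobiator_cycle P x b b a).trans (hleft a b)
  fin_cases i <;> fin_cases j <;> fin_cases k <;>
    simp only [Fin.zero_eta, Fin.mk_one, Fin.reduceFinMk, *]

end Jacobiator

theorem fderiv_affine_mul_apply_single {n : Type*} [Fintype n] [DecidableEq n]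
    (a b : ℝ) (i j l : n) (x : n → ℝ) :
    fderiv ℝ (fun y : n → ℝ => (a * y i + b) * y j) x (Pi.single l 1) =
      a * (Pi.single l 1 : n → ℝ) i * x j + (a * x i + b) * (Pi.single l 1 : n → ℝ) j := by
  have hi := hasFDerivAt_apply (𝕜 := ℝ) i x
  have hj := hasFDerivAt_apply (𝕜 := ℝ) j x
  have hd : HasFDerivAt (fun y : n → ℝ => (a * y i + b) * y j) _ x :=
    ((hi.const_mul a).add_const b).mul hj
  rw [hd.fderiv]
  simp
  ring

section SIRVaccination

variable (α β v : ℝ)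

noncomputable def sirVaccIHamiltonian2 (y : Fin 3 → ℝ) : ℝ :=
  -(y 2 + (α + v) / β * Real.log (β * y 0 + v))

theorem sirVaccIPoisson2_transpose (x : Fin 3 → ℝ) :
    (sirVaccIPoisson2 β v x)ᵀ = -sirVaccIPoisson2 β v x := by
  ext i j
  fin_cases i <;> fin_cases j <;> simp [sirVaccIPoisson2, sub_eq_add_neg]

theorem sirVaccIPoisson1_transpose (x : Fin 3 → ℝ) :
    (sirVaccIPoisson1 α β v x)ᵀ = -sirVaccIPoisson1 α β v x := by
  ext i j
  fin_cases i <;> fin_cases j <;> simp [sirVaccIPoisson1, sub_eq_add_neg]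

theorem jacobiator_sirVaccIPoisson2 (x : Fin 3 → ℝ) :
    jacobiator (sirVaccIPoisson2 β v) x 0 1 2 = 0 := by
  have h12 : (fun y => sirVaccIPoisson2 β v y 1 2) = fun y => (-β * y 0 + -v) * y 1 := by
    ext y; simp [sirVaccIPoisson2]; ring
  have h20 : (fun y => sirVaccIPoisson2 β v y 2 0) = fun y => (-β * y 0 + -v) * y 1 := by
    ext y; simp [sirVaccIPoisson2]; ring
  have h01 : (fun y => sirVaccIPoisson2 β v y 0 1) = fun y => (-β * y 0 + -v) * y 1 := by
    ext y; simp [sirVaccIPoisson2]; ring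
  simp only [jacobiator, h12, h20, h01, fderiv_affine_mul_apply_single, Fin.sum_univ_three]
  simp [sirVaccIPoisson2]
  ring

theorem jacobiator_sirVaccIPoisson1_add_sirVaccIPoisson2 (x : Fin 3 → ℝ) :
    jacobiator (fun y => sirVaccIPoisson1 α β v y + sirVaccIPoisson2 β v y) x 0 1 2 = 0 := by
  have h12 : (fun y => (sirVaccIPoisson1 α β v y + sirVaccIPoisson2 β v y) 1 2) =
      fun y => (0 * y 0 + -(α + v)) * y 1 := by
    ext y; simp [sirVaccIPoisson1, sirVaccIPoisson2]; ring
  have h20 : (fun y => (sirVaccIPoisson1 α β v y + sirVaccIPoisson2 β v y) 2 0) =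
      fun y => (0 * y 0 + 0) * y 1 := by
    ext y; simp [sirVaccIPoisson1, sirVaccIPoisson2]; ring
  have h01 : (fun y => (sirVaccIPoisson1 α β v y + sirVaccIPoisson2 β v y) 0 1) =
      fun y => (-β * y 0 + -v) * y 1 := by
    ext y; simp [sirVaccIPoisson1, sirVaccIPoisson2]; ring
  simp only [jacobiator, h12, h20, h01, fderiv_affine_mul_apply_single, Fin.sum_univ_three]
  simp [sirVaccIPoisson1, sirVaccIPoisson2]
  ring

theorem gradient_sirVaccIHamiltonian2 (hβ : β ≠ 0) {x : Fin 3 → ℝ} (hx : 0 < β * x 0 + v) :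
    (fun j => fderiv ℝ (sirVaccIHamiltonian2 α β v) x (Pi.single j 1)) =
      ![-(α + v) / (β * x 0 + v), 0, -1] := by
  have hlog : HasFDerivAt (fun y : Fin 3 → ℝ => Real.log (β * y 0 + v)) _ x :=
    (((hasFDerivAt_apply (𝕜 := ℝ) 0 x).const_mul β).add_const v).log hx.ne'
  have hH : HasFDerivAt (sirVaccIHamiltonian2 α β v) _ x :=
    ((hasFDerivAt_apply (𝕜 := ℝ) 2 x).add (hlog.const_mul ((α + v) / β))).neg
  rw [hH.fderiv]
  ext j
  fin_cases j <;> simp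
  field_simp
  ring

theorem hamVF_sirVaccIPoisson2 (hβ : β ≠ 0) {x : Fin 3 → ℝ} (hx : 0 < β * x 0 + v) :
    hamVF (sirVaccIPoisson2 β v) (sirVaccIHamiltonian2 α β v) x =
      ![-β * x 0 * x 1 - v * x 1, β * x 0 * x 1 - α * x 1, α * x 1 + v * x 1] := by
  rw [hamVF, gradient_sirVaccIHamiltonian2 α β v hβ hx]
  ext i
  fin_cases i <;> simp [sirVaccIPoisson2, Matrix.mulVec, dotProduct, Fin.sum_univ_three] <;>
    field_simp <;> ring

end SIRVaccination

/-- On `U = {(S,I,R) : β·S + v > 0}`: (i) `π₂` satisfies the Jacobi identity; (ii) with the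
Hamiltonian `H₂ = −(R + ((α+v)/β)·log(β·S + v))` the Hamiltonian vector field of `π₂` is the
vector field `(−β·S·I − v·I, β·S·I − α·I, α·I + v·I)` of the SIR model with vaccination rate
`v·I`; (iii) `π₁ + π₂` also satisfies the Jacobi identity, so the two structures are
compatible. -/
theorem sirVaccinationI_biHamiltonian (α β v : ℝ) (hβ : β ≠ 0) :
    JacobiIdentityOn (sirVaccIPoisson2 β v) {x : Fin 3 → ℝ | β * x 0 + v > 0} ∧
    (∀ x : Fin 3 → ℝ, β * x 0 + v > 0 →
      hamVF (sirVaccIPoisson2 β v)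
          (fun y => -(y 2 + (α + v) / β * Real.log (β * y 0 + v))) x =
        ![-β * x 0 * x 1 - v * x 1, β * x 0 * x 1 - α * x 1, α * x 1 + v * x 1]) ∧
    JacobiIdentityOn (fun x => sirVaccIPoisson1 α β v x + sirVaccIPoisson2 β v x)
      {x : Fin 3 → ℝ | β * x 0 + v > 0} := by
  have hskew₂ := sirVaccIPoisson2_transpose β v
  have hskew : ∀ y, (sirVaccIPoisson1 α β v y + sirVaccIPoisson2 β v y)ᵀ =
      -(sirVaccIPoisson1 α β v y + sirVaccIPoisson2 β v y) := fun y => by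
    rw [Matrix.transpose_add, sirVaccIPoisson1_transpose, hskew₂, neg_add]
  refine ⟨?_, fun x hx => hamVF_sirVaccIPoisson2 α β v hβ hx, ?_⟩
  · exact jacobiIdentityOn_of_jacobiator_zero_one_two hskew₂
      fun x _ => jacobiator_sirVaccIPoisson2 β v x
  · exact jacobiIdentityOn_of_jacobiator_zero_one_two hskew
      fun x _ => jacobiator_sirVaccIPoisson1_add_sirVaccIPoisson2 α β v x
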